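/- Let n ≥ 2, ε ∈ (0, n−1), and let f_ε(x) = ε|x|^{−1−ε} sin(|x|^{−ε}) + (n−1)|x|^{−1} cos(|x|^{−ε}) for x ≠ 0, and F_ε(x) = (x/|x|) cos(|x|^{−ε}). Then F_ε is smooth on ℝⁿ∖{0} and div F_ε(x) = f_ε(x) for all x ≠ 0. -/

import Mathlib

open MeasureTheory Set Real
open scoped ENNReal

variable {n : ℕ}

lemma hasFDerivAt_norm'' {E : Type*} [NormedAddCommGroup E] [InnerProductSpace ℝ E]
    {x : E} (hx : x ≠ 0) :
    HasFDerivAt (fun y : E => ‖y‖) ((‖x‖⁻¹ : ℝ) • innerSL ℝ x) x := by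
  have hr : (0:ℝ) < ‖x‖ := norm_pos_iff.mpr hx
  have h1 : HasFDerivAt (fun y : E => ‖y‖ ^ 2) (2 • innerSL ℝ x) x :=
    (hasStrictFDerivAt_norm_sq x).hasFDerivAt
  have h2 : HasDerivAt Real.sqrt (1 / (2 * Real.sqrt (‖x‖ ^ 2))) (‖x‖ ^ 2) :=
    Real.hasDerivAt_sqrt (by positivity)
  have h3 := h2.comp_hasFDerivAt x h1
  have heq : Real.sqrt ∘ (fun y : E => ‖y‖ ^ 2) = fun y : E => ‖y‖ :=
    funext fun y => Real.sqrt_sq (norm_nonneg y)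
  rw [heq] at h3
  refine h3.congr_fderiv ?_
  rw [Real.sqrt_sq (norm_nonneg x)]
  ext v
  simp only [ContinuousLinearMap.coe_smul', Pi.smul_apply, ContinuousLinearMap.smul_apply,
    smul_eq_mul, two_smul, ContinuousLinearMap.add_apply]
  ring

/-- The divergence of a vector field on `ℝⁿ`. -/
noncomputable def diverg (φ : EuclideanSpace ℝ (Fin n) → EuclideanSpace ℝ (Fin n))
    (x : EuclideanSpace ℝ (Fin n)) : ℝ :=
  ∑ i : Fin n, fderiv ℝ φ x (EuclideanSpace.single i 1) i

theorem div_of_oscillating_radial_field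
    (hn : 2 ≤ n) (ε : ℝ) (hε0 : 0 < ε) (hεn : ε < (n : ℝ) - 1)
    (F : EuclideanSpace ℝ (Fin n) → EuclideanSpace ℝ (Fin n))
    (f : EuclideanSpace ℝ (Fin n) → ℝ)
    (hF : ∀ x, F x = Real.cos (‖x‖ ^ (-ε)) • (‖x‖⁻¹ • x))
    (hf : ∀ x, f x = ε * ‖x‖ ^ (-(1 + ε)) * Real.sin (‖x‖ ^ (-ε)) +
      ((n : ℝ) - 1) * ‖x‖⁻¹ * Real.cos (‖x‖ ^ (-ε))) :
    ContDiffOn ℝ (⊤ : ℕ∞) F {x | x ≠ 0} ∧ ∀ x ≠ 0, diverg F x = f x := by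
  have hFeq : F = fun y => (Real.cos (‖y‖ ^ (-ε)) * ‖y‖⁻¹) • y := by
    funext y; rw [hF y, smul_smul]
  constructor
  · intro x hx
    have hx' : (x : EuclideanSpace ℝ (Fin n)) ≠ 0 := hx
    have h0 : ‖x‖ ≠ 0 := norm_ne_zero_iff.mpr hx'
    apply ContDiffAt.contDiffWithinAt
    rw [hFeq]
    have hnorm : ContDiffAt ℝ (⊤ : ℕ∞) (fun y : EuclideanSpace ℝ (Fin n) => ‖y‖) x :=
      contDiffAt_norm ℝ hx'
    have hrpow : ContDiffAt ℝ (⊤ : ℕ∞) (fun y : EuclideanSpace ℝ (Fin n) => ‖y‖ ^ (-ε)) x :=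
      hnorm.rpow_const_of_ne h0
    have hcos : ContDiffAt ℝ (⊤ : ℕ∞)
        (fun y : EuclideanSpace ℝ (Fin n) => Real.cos (‖y‖ ^ (-ε))) x :=
      Real.contDiff_cos.contDiffAt.comp x hrpow
    exact ((hcos.mul (hnorm.inv h0)).smul contDiffAt_id)
  · intro x hx
    have hr : (0:ℝ) < ‖x‖ := norm_pos_iff.mpr hx
    set r : ℝ := ‖x‖ with hrdef
    have h_rpow : HasDerivAt (fun s : ℝ => s ^ (-ε)) (-ε * r ^ (-ε - 1)) r :=
      Real.hasDerivAt_rpow_const (Or.inl hr.ne')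
    have h_cos : HasDerivAt (fun s : ℝ => Real.cos (s ^ (-ε)))
        (-Real.sin (r ^ (-ε)) * (-ε * r ^ (-ε - 1))) r :=
      (Real.hasDerivAt_cos _).comp r h_rpow
    have h_inv : HasDerivAt (fun s : ℝ => s⁻¹) (-(r ^ 2)⁻¹) r := hasDerivAt_inv hr.ne'
    have h_g : HasDerivAt (fun s : ℝ => Real.cos (s ^ (-ε)) * s⁻¹)
        (-Real.sin (r ^ (-ε)) * (-ε * r ^ (-ε - 1)) * r⁻¹ +
          Real.cos (r ^ (-ε)) * -(r ^ 2)⁻¹) r := h_cos.mul h_inv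
    set g' : ℝ := -Real.sin (r ^ (-ε)) * (-ε * r ^ (-ε - 1)) * r⁻¹ +
      Real.cos (r ^ (-ε)) * -(r ^ 2)⁻¹ with hg'
    have h_norm := hasFDerivAt_norm'' hx
    have h_phi : HasFDerivAt
        (fun y : EuclideanSpace ℝ (Fin n) => Real.cos (‖y‖ ^ (-ε)) * ‖y‖⁻¹)
        (g' • ((r⁻¹ : ℝ) • innerSL ℝ x)) x :=
      by have := h_g.comp_hasFDerivAt x h_norm; exact this
    have h_DF : HasFDerivAt F
        ((Real.cos (r ^ (-ε)) * r⁻¹) • ContinuousLinearMap.id ℝ _ +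
          (g' • ((r⁻¹ : ℝ) • innerSL ℝ x)).smulRight x) x := by
      rw [hFeq]
      exact h_phi.smul (hasFDerivAt_id x)
    have hsum : ∑ i : Fin n, x i * x i = r ^ 2 := by
      have := @real_inner_self_eq_norm_sq (EuclideanSpace ℝ (Fin n)) _ _ x
      rw [← this, PiLp.inner_apply]
      simp [RCLike.inner_apply, mul_comm]
      simp only [sq]
    rw [hf x, diverg]
    have hterm : ∀ i : Fin n,
        fderiv ℝ F x (EuclideanSpace.single i 1) i =
        Real.cos (r ^ (-ε)) * r⁻¹ + g' * r⁻¹ * (x i * x i) := by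
      intro i
      rw [h_DF.fderiv]
      have hinner : (innerSL ℝ x) (EuclideanSpace.single i (1:ℝ)) = x i := by
        simp [EuclideanSpace.inner_single_right]
      simp only [ContinuousLinearMap.add_apply, ContinuousLinearMap.smul_apply,
        ContinuousLinearMap.id_apply, ContinuousLinearMap.smulRight_apply, hinner]
      simp only [PiLp.add_apply, PiLp.smul_apply, smul_eq_mul,
        EuclideanSpace.single_apply]
      simp only [if_true]
      ring
    rw [Finset.sum_congr rfl (fun i _ => hterm i)]
    rw [Finset.sum_add_distrib, Finset.sum_const, ← Finset.mul_sum, hsum]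
    have hA : r ^ (-ε - 1) = r ^ (-(1 + ε)) := by ring_nf
    rw [hg', hA]
    set A : ℝ := r ^ (-(1 + ε))
    set s : ℝ := Real.sin (r ^ (-ε))
    set c : ℝ := Real.cos (r ^ (-ε))
    simp only [Finset.card_univ, Fintype.card_fin, nsmul_eq_mul]
    field_simp
    ring
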